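/- Let A be a simple graph and let id : V(A) → V(A) be the identity function. If the Sierpiński product A ⊗_id A is 2-connected, then A is 2-connected. -/

import Mathlib

/-- The Sierpiński product of simple graphs `A` and `B` with respect to `f : V(A) → V(B)`:
vertices are pairs `(a, b)`; two vertices are adjacent iff they lie in the same fibre and
their second coordinates are adjacent in `B`, or their first coordinates are adjacent in `A`
and the second coordinates are given by `f` applied to the other first coordinate. -/
def SierpinskiProd {α β : Type*} (A : SimpleGraph α) (B : SimpleGraph β)
    (f : α → β) : SimpleGraph (α × β) where
  Adj p q := (p.1 = q.1 ∧ B.Adj p.2 q.2) ∨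
    (A.Adj p.1 q.1 ∧ p.2 = f q.1 ∧ q.2 = f p.1)
  symm := by
    refine ⟨?_⟩
    rintro ⟨a₁, b₁⟩ ⟨a₂, b₂⟩ (⟨h, hB⟩ | ⟨hA, h₁, h₂⟩)
    · exact Or.inl ⟨h.symm, hB.symm⟩
    · exact Or.inr ⟨hA.symm, h₂, h₁⟩
  loopless := by
    refine ⟨?_⟩
    rintro ⟨a, b⟩ (⟨_, hB⟩ | ⟨hA, _, _⟩)
    · exact B.ne_of_adj hB rfl
    · exact A.ne_of_adj hA rfl

/-- A vertex `v` of a graph `G` is a separating vertex if deleting `v` (taking the induced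
subgraph on the remaining vertices) yields a graph that is not connected. -/
def IsSeparatingVertex {V : Type*} (G : SimpleGraph V) (v : V) : Prop :=
  ¬ (G.induce ({v}ᶜ : Set V)).Connected

/-- A graph `G` is `k`-connected if it has more than `k` vertices and deleting any set of
fewer than `k` vertices leaves a connected graph. -/
def KConnected {V : Type*} [Fintype V] (k : ℕ) (G : SimpleGraph V) : Prop :=
  k < Fintype.card V ∧ ∀ S : Set V, S.ncard < k → (G.induce Sᶜ).Connected

/-- `W` is a cut-set of `G` if deleting all vertices of `W` strictly increases the number of
connected components. -/
def IsCutSet {V : Type*} (G : SimpleGraph V) (W : Set V) : Prop :=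
  Nat.card G.ConnectedComponent < Nat.card (G.induce Wᶜ).ConnectedComponent

/-- `W` is a minimal cut-set of `G` if it is a cut-set and no proper subset is a cut-set. -/
def IsMinCutSet {V : Type*} (G : SimpleGraph V) (W : Set V) : Prop :=
  IsCutSet G W ∧ ∀ W' ⊂ W, ¬ IsCutSet G W'

/-!
Deleting a diagonal vertex `(v, v)` from `A ⊗_id A` and folding the fibre over `v` onto `A`
(send `(v, b)` to `b` and `(a, b)` to `a` for `a ≠ v`) maps every edge to an edge or a single
vertex of `A - v`, surjectively; so connectivity of the product minus `(v, v)` passes to `A - v`.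
The same folding with nothing deleted is the projection to the first factor. If `A` had only two
vertices `u, w`, the vertex `(u, u)` would be adjacent to nothing but `(u, w)`, which is then a cut
vertex of the product.
-/

namespace SimpleGraph

variable {V W : Type*} {G : SimpleGraph V} {H : SimpleGraph W}

theorem Connected.of_surjective_of_adj_imp (hG : G.Connected) (f : V → W)
    (hsurj : Function.Surjective f)
    (hf : ∀ ⦃u v⦄, G.Adj u v → f u = f v ∨ H.Adj (f u) (f v)) : H.Connected := by
  have : Nonempty W := hG.nonempty.map f
  refine ⟨fun x y => ?_⟩
  obtain ⟨u, rfl⟩ := hsurj x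
  obtain ⟨v, rfl⟩ := hsurj y
  refine (reachable_iff_reflTransGen _ _).mpr ?_
  refine ((reachable_iff_reflTransGen u v).mp (hG.preconnected u v)).lift' f fun a b hab => ?_
  rcases hf hab with heq | hadj
  · show Relation.ReflTransGen H.Adj (f a) (f b)
    rw [heq]
  · exact .single hadj

theorem not_connected_induce_compl_of_neighborSet_subset {S : Set V} {x y : V} (hx : x ∉ S)
    (hy : y ∉ S) (hxy : x ≠ y) (hN : G.neighborSet x ⊆ S) : ¬ (G.induce Sᶜ).Connected := by
  intro hconn
  obtain ⟨z, hz⟩ := (hconn.preconnected ⟨x, hx⟩ ⟨y, hy⟩).nonempty_neighborSet_left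
    (fun h => hxy (congrArg Subtype.val h))
  exact z.2 (hN hz)

end SimpleGraph

open SimpleGraph

section SierpinskiSelf

variable {α : Type*} {A : SimpleGraph α}

theorem sierpinskiProd_adj {β : Type*} {B : SimpleGraph β} {f : α → β} {a₁ a₂ : α} {b₁ b₂ : β} :
    (SierpinskiProd A B f).Adj (a₁, b₁) (a₂, b₂) ↔
      (a₁ = a₂ ∧ B.Adj b₁ b₂) ∨ (A.Adj a₁ a₂ ∧ b₁ = f a₂ ∧ b₂ = f a₁) :=
  Iff.rfl

theorem sierpinskiProd_self_adj_diag {a c d : α} (h : (SierpinskiProd A A id).Adj (a, a) (c, d)) :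
    c = a ∧ A.Adj a d := by
  rcases sierpinskiProd_adj.mp h with ⟨rfl, had⟩ | ⟨hac, rfl, -⟩
  · exact ⟨rfl, had⟩
  · exact absurd hac (A.loopless.irrefl a)

open Classical in
noncomputable def sierpinskiFold (S : Set α) (p : α × α) : α :=
  if p.1 ∈ S then p.2 else p.1

theorem sierpinskiFold_diag (S : Set α) (a : α) : sierpinskiFold S (a, a) = a := by
  unfold sierpinskiFold; split_ifs <;> rfl

theorem sierpinskiFold_notMem {S : Set α} (hS : S.Subsingleton) {p : α × α}
    (hp : p ∉ (fun a => (a, a)) '' S) : sierpinskiFold S p ∉ S := by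
  obtain ⟨a, b⟩ := p
  unfold sierpinskiFold
  split_ifs with ha
  · intro hb
    exact hp ⟨b, hb, by rw [show a = b from hS ha hb]⟩
  · exact ha

theorem sierpinskiFold_adj {S : Set α} (hS : S.Subsingleton) {p q : α × α}
    (h : (SierpinskiProd A A id).Adj p q) :
    sierpinskiFold S p = sierpinskiFold S q ∨ A.Adj (sierpinskiFold S p) (sierpinskiFold S q) := by
  obtain ⟨a, b⟩ := p
  obtain ⟨c, d⟩ := q
  unfold sierpinskiFold
  rcases sierpinskiProd_adj.mp h with ⟨rfl, hbd⟩ | ⟨hac, hb, hd⟩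
  · split_ifs
    · exact .inr hbd
    · exact .inl rfl
  · rw [id] at hb hd
    subst b d
    split_ifs with ha hc hc
    · have hac' : A.Adj c c := (show a = c from hS ha hc) ▸ hac
      exact absurd hac' (A.loopless.irrefl c)
    all_goals first | exact .inl rfl | exact .inr hac

theorem connected_induce_compl_of_sierpinskiProd_self {S : Set α} (hS : S.Subsingleton)
    (h : ((SierpinskiProd A A id).induce ((fun a => (a, a)) '' S)ᶜ).Connected) :
    (A.induce Sᶜ).Connected := by
  refine h.of_surjective_of_adj_imp (fun p => ⟨sierpinskiFold S p, sierpinskiFold_notMem hS p.2⟩)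
    ?_ ?_
  · rintro ⟨a, ha⟩
    refine ⟨⟨(a, a), fun ⟨b, hb, hba⟩ => ?_⟩, Subtype.ext (sierpinskiFold_diag S a)⟩
    cases hba
    exact ha hb
  · intro p q hpq
    exact (sierpinskiFold_adj hS hpq).imp Subtype.ext id

theorem not_connected_sierpinskiProd_self_of_neighborSet_subset {u w : α} (huw : u ≠ w)
    (hN : A.neighborSet u ⊆ {w}) : ¬ ((SierpinskiProd A A id).induce {(u, w)}ᶜ).Connected := by
  refine not_connected_induce_compl_of_neighborSet_subset (x := (u, u)) (y := (w, w))
    (by simpa using huw) (by simpa using huw.symm) (by simpa using huw) ?_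
  rintro ⟨c, d⟩ hq
  obtain ⟨rfl, hud⟩ := sierpinskiProd_self_adj_diag hq
  simpa using hN hud

end SierpinskiSelf

/-- **Lemma.** If `A ⊗_id A` is `2`-connected then `A` is `2`-connected. -/
theorem sierpinski_self_two_connected {α : Type*} [Fintype α] (A : SimpleGraph α)
    (h : KConnected 2 (SierpinskiProd A A id)) : KConnected 2 A := by
  obtain ⟨hcard, hdel⟩ := h
  rw [Fintype.card_prod] at hcard
  have hone : 1 < Fintype.card α := by nlinarith
  have htwo : Fintype.card α ≠ 2 := by
    intro htwo
    obtain ⟨u⟩ : Nonempty α := Fintype.card_pos_iff.mp (by omega)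
    obtain ⟨w, hwu, huniq⟩ := (Nat.card_eq_two_iff' u).mp (Nat.card_eq_fintype_card.trans htwo)
    exact not_connected_sierpinskiProd_self_of_neighborSet_subset hwu.symm
      (fun z hz => huniq z (A.ne_of_adj hz).symm) (hdel _ (by simp))
  refine ⟨by omega, fun S hS => connected_induce_compl_of_sierpinskiProd_self ?_ (hdel _ ?_)⟩
  · exact Set.ncard_le_one_iff_subsingleton.mp (by omega)
  · exact (Set.ncard_image_le (Set.toFinite S)).trans_lt hS
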